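/- For a word x in Z_m^n chosen uniformly at random, the expected value of the sum of squares of the lengths of the maximal alternating segments of x equals n(4m^2 - 3m + 2)/m^2 + (6m-4)/m^2 - 4 - (2/(m-1))(1 - 1/m^n) + 2/m^n. -/

import Mathlib

/-!
Expanding `s²` as the number of ordered pairs of positions of a segment, `∑ sᵢ²` counts the
pairs `(a, b)` of positions together with a maximal alternating segment containing both.
For `a < b` such a segment is unique when it exists (two maximal segments sharing two
positions coincide), and it exists exactly when `x` alternates on `[a, b]`, which has
probability `(m - 1) / m ^ (b - a)` since an alternating block is determined by its first two
letters. A single position `u` lies in a segment for each of the pairs `(u-1, u)`, `(u, u+1)`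
on which `x` alternates, these two segments coincide when `x` alternates on `[u-1, u+1]`, and
`u` is a segment on its own when its neighbours equal `x u`. Summing the resulting
expectations over positions gives a geometric series.
-/

open Finset

/-- The (0-indexed, inclusive) segment `x_i,…,x_j` is alternating, i.e. of the
form `abab…` : adjacent symbols differ and the segment has period 2. -/
def IsAltOn {m : ℕ} (x : ℕ → Fin m) (i j : ℕ) : Prop :=
  (∀ k ∈ Finset.Ico i j, x k ≠ x (k + 1)) ∧ ∀ k ∈ Finset.Ico i (j - 1), x k = x (k + 2)

instance {m : ℕ} (x : ℕ → Fin m) (i j : ℕ) : Decidable (IsAltOn x i j) :=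
  inferInstanceAs (Decidable (_ ∧ _))

/-- The set of (0-indexed, inclusive) index pairs of maximal alternating segments
of the word `x_0,…,x_{n-1}`. -/
def altSegs {m : ℕ} (n : ℕ) (x : ℕ → Fin m) : Finset (ℕ × ℕ) :=
  (Finset.range n ×ˢ Finset.range n).filter (fun p => p.1 ≤ p.2 ∧ IsAltOn x p.1 p.2 ∧
    (p.1 = 0 ∨ ¬ IsAltOn x (p.1 - 1) p.2) ∧ (p.2 = n - 1 ∨ ¬ IsAltOn x p.1 (p.2 + 1)))

/-- `a(x)` : the number of maximal alternating segments of `x_0,…,x_{n-1}`. -/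
def aCount {m : ℕ} (n : ℕ) (x : ℕ → Fin m) : ℕ := (altSegs n x).card

/-- `∑ s_i` : the sum of the lengths of the maximal alternating segments. -/
def sumLen {m : ℕ} (n : ℕ) (x : ℕ → Fin m) : ℕ := ∑ p ∈ altSegs n x, (p.2 - p.1 + 1)

/-- `∑ s_i²` : the sum of the squares of the lengths of the maximal alternating segments. -/
def sumLenSq {m : ℕ} (n : ℕ) (x : ℕ → Fin m) : ℕ := ∑ p ∈ altSegs n x, (p.2 - p.1 + 1) ^ 2

/-- `ρ(x)` : the number of runs of the word `x_0,…,x_{n-1}`. -/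
def rho {m : ℕ} (n : ℕ) (x : ℕ → Fin m) : ℕ :=
  1 + ((Finset.range (n - 1)).filter (fun i => x i ≠ x (i + 1))).card

/-- `h(x)` : the length of the first maximal alternating segment of `x_0,…,x_{n-1}`. -/
def headAlt {m : ℕ} (n : ℕ) (x : ℕ → Fin m) : ℕ :=
  ((Finset.range n).filter (fun j => IsAltOn x 0 j)).card

/-- `t(x)` : the length of the last maximal alternating segment of `x_0,…,x_{n-1}`. -/
def tailAlt {m : ℕ} (n : ℕ) (x : ℕ → Fin m) : ℕ :=
  ((Finset.range n).filter (fun j => IsAltOn x (n - 1 - j) (n - 1))).card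

/-- Extend a word of length `n` to a function `ℕ → Fin m` (junk value `0` beyond `n`). -/
def extWord {m : ℕ} (n : ℕ) (hm : 0 < m) (y : Fin n → Fin m) : ℕ → Fin m :=
  fun i => if h : i < n then y ⟨i, h⟩ else ⟨0, hm⟩

/-- The FLL ball of radius 1 around `x` : all words `y` of length `n` sharing with `x`
a common subsequence of length `n - 1` (equivalently, `d_l(x,y) ≤ 1`). -/
def L1ball {m : ℕ} (n : ℕ) (x : Fin n → Fin m) : Set (Fin n → Fin m) :=
  {y | ∃ z : List (Fin m), z.length = n - 1 ∧ z.Sublist (List.ofFn x) ∧ z.Sublist (List.ofFn y)}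

/-- `|L_1(x)|` : the size of the FLL ball of radius 1 around `x`. -/
noncomputable def L1size {m : ℕ} (n : ℕ) (x : Fin n → Fin m) : ℕ := (L1ball n x).ncard

/-- `f_n(y)` for binary words `y` of length `len` : `ρ(y)·n - (1/2)∑ s_j²`. -/
noncomputable def fB (n len : ℕ) (y : ℕ → Fin 2) : ℝ :=
  (rho len y : ℝ) * n - (sumLenSq len y : ℝ) / 2

/-- `f_{m,n}(y)` for words `y` of length `len` over `Z_m` :
`ρ(y)(mn-n-1) - (1/2)∑ s_j² + (3/2)∑ s_j - a(y)`. -/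
noncomputable def fM (m n len : ℕ) (y : ℕ → Fin m) : ℝ :=
  (rho len y : ℝ) * ((m : ℝ) * n - n - 1) - (sumLenSq len y : ℝ) / 2
    + 3 / 2 * (sumLen len y : ℝ) - (aCount len y : ℝ)

theorem Finset.sum_range_sum_range_of_symm {M : Type*} [AddCommMonoid M] (g : ℕ → ℕ → M)
    (hg : ∀ a b, g a b = g b a) (n : ℕ) :
    ∑ a ∈ range n, ∑ b ∈ range n, g a b
      = ∑ u ∈ range n, g u u + 2 • ∑ b ∈ range n, ∑ a ∈ range b, g a b := by
  induction n with
  | zero => simp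
  | succ n ih =>
    simp only [sum_range_succ, sum_add_distrib, ih, smul_add, two_smul, hg n]
    abel

theorem sq_sub_add_one_eq_sum_sum_ite {i j n : ℕ} (hij : i ≤ j) (hj : j < n) :
    (j - i + 1) ^ 2 = ∑ a ∈ range n, ∑ b ∈ range n,
      if i ≤ min a b ∧ max a b ≤ j then 1 else 0 := by
  have hrow : ∑ a ∈ range n, (if i ≤ a ∧ a ≤ j then 1 else 0) = j - i + 1 := by
    rw [← card_filter, show (range n).filter (fun a => i ≤ a ∧ a ≤ j) = Icc i j by
      ext a; simp only [mem_filter, mem_range, mem_Icc]; omega, Nat.card_Icc]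
    omega
  rw [← hrow, sq, sum_mul_sum]
  refine sum_congr rfl fun a _ => sum_congr rfl fun b _ => ?_
  rw [ite_zero_mul_ite_zero, one_mul]
  exact if_congr (by omega) rfl rfl

theorem sum_range_sub_one_div_pow {K : Type*} [Field K] {r : K} (hr : r ≠ 0) (b : ℕ) :
    ∑ a ∈ range b, (r - 1) / r ^ (b - a) = 1 - 1 / r ^ b := by
  induction b with
  | zero => simp
  | succ b ih =>
    simp only [sum_range_succ', Nat.add_sub_add_right, ih, Nat.sub_zero]
    field_simp
    ring

theorem sum_range_ite_zero_or_last {M : Type*} [AddCommMonoid M] (k : ℕ) (s t : M) :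
    ∑ u ∈ range (k + 2), (if u = 0 ∨ u + 1 = k + 2 then s else t) = 2 • s + k • t := by
  rw [sum_range_succ, sum_range_succ', if_pos (Or.inr rfl), if_pos (Or.inl rfl),
    sum_congr rfl fun u hu => if_neg (by simp only [mem_range] at hu; omega), sum_const, card_range,
    two_smul]
  abel

theorem card_filter_forall_mem_eq {n m : ℕ} (s : Finset (Fin n)) (g : Fin n → Fin m) :
    #{y : Fin n → Fin m | ∀ k ∈ s, y k = g k} = m ^ (n - #s) := by
  have hpi : ({y : Fin n → Fin m | ∀ k ∈ s, y k = g k} : Finset _)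
      = Fintype.piFinset fun k => if k ∈ s then {g k} else univ := by
    ext y
    simp only [mem_filter, mem_univ, true_and, Fintype.mem_piFinset]
    refine forall_congr' fun k => ?_
    split_ifs <;> simp [*]
  rw [hpi, Fintype.card_piFinset]
  simp only [apply_ite card, card_singleton, card_univ, Fintype.card_fin]
  rw [prod_ite, prod_const_one, one_mul, prod_const, filter_not, card_univ_sdiff]
  simp

section pattern

variable {α : Type*} {x : ℕ → α} {i j a b u : ℕ}

theorem forall_mem_Icc_eq_mod_two_iff :
    (∀ k ∈ Icc i j, x k = x (i + (k - i) % 2))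
      ↔ ∀ k ∈ Ico i (j - 1), x k = x (k + 2) := by
  constructor
  · intro h k hk
    simp only [mem_Ico] at hk
    rw [h k (mem_Icc.2 (by omega)), h (k + 2) (mem_Icc.2 (by omega))]
    congr 2
    omega
  · intro h k
    induction k using Nat.strong_induction_on with
    | _ k ih =>
      intro hk
      simp only [mem_Icc] at hk
      by_cases hki : k < i + 2
      · exact congrArg x (by omega)
      · have hk2 := h (k - 2) (mem_Ico.2 (by omega))
        rw [show k - 2 + 2 = k by omega] at hk2
        rw [← hk2, ih (k - 2) (by omega) (mem_Icc.2 (by omega))]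
        congr 2
        omega

theorem forall_mem_Icc_eq_ite_iff (hab : a < b) (c : α × α) :
    (∀ k ∈ Icc a b, x k = if (k - a) % 2 = 0 then c.1 else c.2)
      ↔ (x a, x (a + 1)) = c ∧ ∀ k ∈ Icc a b, x k = x (a + (k - a) % 2) := by
  constructor
  · intro h
    have ha := h a (mem_Icc.2 ⟨le_rfl, hab.le⟩)
    have ha1 := h (a + 1) (mem_Icc.2 ⟨by omega, hab⟩)
    simp only [Nat.sub_self, Nat.zero_mod, if_true, Nat.add_sub_cancel_left, Nat.one_mod,
      one_ne_zero, if_false] at ha ha1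
    refine ⟨Prod.ext ha ha1, fun k hk => ?_⟩
    rcases Nat.mod_two_eq_zero_or_one (k - a) with hr | hr <;> simp [h k hk, hr, ha, ha1]
  · rintro ⟨rfl, h⟩ k hk
    rcases Nat.mod_two_eq_zero_or_one (k - a) with hr | hr <;> simp [h k hk, hr]

theorem forall_mem_Icc_eq_iff (hab : a < b) (hu : u ∈ Icc a b) :
    (∀ k ∈ Icc a b, x k = x u)
      ↔ x a = x (a + 1) ∧ ∀ k ∈ Icc a b, x k = x (a + (k - a) % 2) := by
  have hr : ∀ k, a + (k - a) % 2 ∈ Icc a b := fun k => mem_Icc.2 (by omega)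
  refine ⟨fun h => ⟨?_, fun k hk => (h k hk).trans (h _ (hr k)).symm⟩,
    fun ⟨h01, h⟩ => ?_⟩
  · exact (h a (mem_Icc.2 ⟨le_rfl, hab.le⟩)).trans (h _ (mem_Icc.2 ⟨by omega, hab⟩)).symm
  · have hconst : ∀ k ∈ Icc a b, x k = x a := fun k hk => by
      rw [h k hk]
      rcases Nat.mod_two_eq_zero_or_one (k - a) with hr | hr <;> simp [hr, h01]
    exact fun k hk => (hconst k hk).trans (hconst u hu).symm

end pattern

namespace IsAltOn

variable {m n : ℕ} {x : ℕ → Fin m} {i j a b : ℕ}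

theorem mono (h : IsAltOn x i j) (hi : i ≤ a) (hj : b ≤ j) : IsAltOn x a b :=
  ⟨fun k hk => h.1 k (by simp only [mem_Ico] at hk ⊢; omega),
    fun k hk => h.2 k (by simp only [mem_Ico] at hk ⊢; omega)⟩

theorem self (x : ℕ → Fin m) (i : ℕ) : IsAltOn x i i :=
  ⟨fun k hk => by simp only [mem_Ico] at hk; omega,
    fun k hk => by simp only [mem_Ico] at hk; omega⟩

theorem succ_iff : IsAltOn x i (i + 1) ↔ x i ≠ x (i + 1) := by
  refine ⟨fun h => h.1 i (by simp), fun h => ⟨fun k hk => ?_, fun k hk => ?_⟩⟩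
  · obtain rfl : k = i := by simp only [mem_Ico] at hk; omega
    exact h
  · simp only [mem_Ico] at hk; omega

/-- The overlap must contain two positions, so that the period two propagates across it. -/
theorem union {i' j' : ℕ} (h : IsAltOn x i j) (h' : IsAltOn x i' j') (hov : max i i' < min j j') :
    IsAltOn x (min i i') (max j j') := by
  refine ⟨fun k hk => ?_, fun k hk => ?_⟩ <;> simp only [mem_Ico] at hk
  · by_cases hk' : i ≤ k ∧ k < j
    · exact h.1 k (mem_Ico.2 hk')
    · exact h'.1 k (mem_Ico.2 (by omega))
  · by_cases hk' : i ≤ k ∧ k < j - 1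
    · exact h.2 k (mem_Ico.2 hk')
    · exact h'.2 k (mem_Ico.2 (by omega))

end IsAltOn

section altSegs

variable {m n : ℕ} {x : ℕ → Fin m} {a b u : ℕ} {p q : ℕ × ℕ}

theorem mem_altSegs :
    p ∈ altSegs n x ↔ p.1 < n ∧ p.2 < n ∧ p.1 ≤ p.2 ∧ IsAltOn x p.1 p.2 ∧
      (p.1 = 0 ∨ ¬ IsAltOn x (p.1 - 1) p.2) ∧
      (p.2 = n - 1 ∨ ¬ IsAltOn x p.1 (p.2 + 1)) := by
  simp only [altSegs, mem_filter, mem_product, mem_range, and_assoc]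

theorem exists_mem_altSegs_of_isAltOn (hab : a ≤ b) (hb : b < n) (h : IsAltOn x a b) :
    ∃ p ∈ altSegs n x, p.1 ≤ a ∧ b ≤ p.2 := by
  set S := (range n ×ˢ range n).filter fun p : ℕ × ℕ =>
    p.1 ≤ a ∧ b ≤ p.2 ∧ IsAltOn x p.1 p.2
  have hS : ∀ p, p ∈ S ↔ p.2 < n ∧ p.1 ≤ a ∧ b ≤ p.2 ∧ IsAltOn x p.1 p.2 := by
    intro p
    simp only [S, mem_filter, mem_product, mem_range]
    constructor
    · rintro ⟨⟨-, h2⟩, h⟩; exact ⟨h2, h⟩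
    · rintro ⟨h2, h⟩; exact ⟨⟨by omega, h2⟩, h⟩
  obtain ⟨p, hp, hmax⟩ :=
    S.exists_max_image (fun p => p.2 - p.1) ⟨(a, b), (hS _).2 ⟨hb, le_rfl, le_rfl, h⟩⟩
  obtain ⟨hp2, hpa, hpb, hpalt⟩ := (hS p).1 hp
  refine ⟨p, mem_altSegs.2 ⟨by omega, hp2, by omega, hpalt, ?_, ?_⟩, hpa, hpb⟩
  · refine or_iff_not_imp_left.2 fun h0 hl => ?_
    have := hmax (p.1 - 1, p.2) ((hS _).2 ⟨hp2, by omega, hpb, hl⟩)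
    omega
  · refine or_iff_not_imp_left.2 fun hn hr => ?_
    have := hmax (p.1, p.2 + 1) ((hS _).2 ⟨by omega, hpa, by omega, hr⟩)
    omega

theorem eq_of_mem_altSegs_of_isAltOn {i j : ℕ} (hp : p ∈ altSegs n x) (h : IsAltOn x i j)
    (hi : i ≤ p.1) (hj : p.2 ≤ j) (hjn : j < n) : p = (i, j) := by
  obtain ⟨-, -, hle, -, hl, hr⟩ := mem_altSegs.1 hp
  refine Prod.ext (le_antisymm ?_ hi) (le_antisymm hj ?_)
  · by_contra! hlt
    exact hl.elim (by omega) (· (h.mono (by omega) hj))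
  · by_contra! hlt
    exact hr.elim (by omega) (· (h.mono hi (by omega)))

theorem eq_of_mem_altSegs_of_covers (hab : a < b) (hp : p ∈ altSegs n x) (hq : q ∈ altSegs n x)
    (hpa : p.1 ≤ a) (hpb : b ≤ p.2) (hqa : q.1 ≤ a) (hqb : b ≤ q.2) : p = q := by
  have hp' := mem_altSegs.1 hp
  have hq' := mem_altSegs.1 hq
  have hU := hp'.2.2.2.1.union hq'.2.2.2.1 (by omega)
  exact (eq_of_mem_altSegs_of_isAltOn hp hU (min_le_left _ _) (le_max_left _ _) (by omega)).trans
    (eq_of_mem_altSegs_of_isAltOn hq hU (min_le_right _ _) (le_max_right _ _) (by omega)).symm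

theorem isAltOn_iff (hab : a < b) :
    IsAltOn x a b ↔ (x a, x (a + 1)) ∈ (univ : Finset (Fin m)).offDiag
      ∧ ∀ k ∈ Icc a b, x k = x (a + (k - a) % 2) := by
  simp only [mem_offDiag, mem_univ, true_and]
  rw [IsAltOn, ← forall_mem_Icc_eq_mod_two_iff]
  refine ⟨fun h => ⟨h.1 a (mem_Ico.2 ⟨le_rfl, hab⟩), h.2⟩,
    fun ⟨hne, h⟩ => ⟨fun k hk => ?_, h⟩⟩
  simp only [mem_Ico] at hk
  rw [h k (mem_Icc.2 (by omega)), h (k + 1) (mem_Icc.2 (by omega))]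
  rcases Nat.mod_two_eq_zero_or_one (k - a) with hr | hr
  · rwa [hr, show (k + 1 - a) % 2 = 1 by omega]
  · rw [hr, show (k + 1 - a) % 2 = 0 by omega]
    exact hne.symm

/-- `u - 1` truncates to `0` at `u = 0`: the window is `[u - 1, u + 1]` clipped to `[0, n - 1]`. -/
theorem mem_altSegs_self_iff (hu : u < n) :
    (u, u) ∈ altSegs n x ↔ ∀ k ∈ Icc (u - 1) (min (u + 1) (n - 1)), x k = x u := by
  have hl : (u = 0 ∨ ¬IsAltOn x (u - 1) u) ↔ (0 < u → x (u - 1) = x u) := by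
    rcases u with _ | v
    · simp
    · simp [IsAltOn.succ_iff]
  have hr : (u = n - 1 ∨ ¬IsAltOn x u (u + 1)) ↔ (u + 1 < n → x u = x (u + 1)) := by
    rw [IsAltOn.succ_iff, not_not]
    by_cases h : u + 1 < n
    · simp [h, show u ≠ n - 1 by omega]
    · exact iff_of_true (Or.inl (by omega)) fun h' => absurd h' h
  rw [mem_altSegs]
  simp only [hu, le_refl, true_and, IsAltOn.self, hl, hr]
  constructor
  · rintro ⟨h1, h2⟩ k hk
    simp only [mem_Icc] at hk
    rcases (by omega : (0 < u ∧ k = u - 1) ∨ k = u ∨ (u + 1 < n ∧ k = u + 1))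
      with ⟨h0, rfl⟩ | rfl | ⟨h0, rfl⟩
    · exact h1 h0
    · rfl
    · exact (h2 h0).symm
  · intro h
    exact ⟨fun _ => h _ (mem_Icc.2 (by omega)), fun _ => (h _ (mem_Icc.2 (by omega))).symm⟩

end altSegs

def coverCount {m : ℕ} (n : ℕ) (x : ℕ → Fin m) (a b : ℕ) : ℕ :=
  #{p ∈ altSegs n x | p.1 ≤ a ∧ b ≤ p.2}

section coverCount

variable {m n : ℕ} {x : ℕ → Fin m} {a b u : ℕ}

theorem sumLenSq_eq_sum_coverCount (n : ℕ) (x : ℕ → Fin m) :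
    sumLenSq n x = ∑ u ∈ range n, coverCount n x u u
      + 2 * ∑ b ∈ range n, ∑ a ∈ range b, coverCount n x a b := by
  have hseg : ∀ p ∈ altSegs n x, (p.2 - p.1 + 1) ^ 2 = ∑ a ∈ range n, ∑ b ∈ range n,
      if p.1 ≤ min a b ∧ max a b ≤ p.2 then 1 else 0 :=
    fun p hp => sq_sub_add_one_eq_sum_sum_ite (mem_altSegs.1 hp).2.2.1 (mem_altSegs.1 hp).2.1
  have hsym := sum_range_sum_range_of_symm (fun a b => coverCount n x (min a b) (max a b))
    (fun a b => by rw [min_comm, max_comm]) n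
  simp only [min_self, max_self, smul_eq_mul] at hsym
  calc sumLenSq n x = ∑ a ∈ range n, ∑ b ∈ range n, coverCount n x (min a b) (max a b) := by
        rw [sumLenSq, sum_congr rfl hseg, sum_comm]
        refine sum_congr rfl fun a _ => ?_
        rw [sum_comm]
        simp only [coverCount, card_filter]
    _ = _ := by
        rw [hsym]
        congr 2
        refine sum_congr rfl fun b _ => sum_congr rfl fun a ha => ?_
        have hab : a < b := mem_range.1 ha
        rw [min_eq_left hab.le, max_eq_right hab.le]

theorem coverCount_eq_ite (hab : a < b) :
    coverCount n x a b = if b < n ∧ IsAltOn x a b then 1 else 0 := by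
  split_ifs with h
  · obtain ⟨p, hp, hpa, hpb⟩ := exists_mem_altSegs_of_isAltOn hab.le h.1 h.2
    refine card_eq_one.2 ⟨p, eq_singleton_iff_unique_mem.2 ⟨mem_filter.2 ⟨hp, hpa, hpb⟩,
      fun q hq => ?_⟩⟩
    obtain ⟨hq, hqa, hqb⟩ := mem_filter.1 hq
    exact eq_of_mem_altSegs_of_covers hab hq hp hqa hqb hpa hpb
  · refine card_eq_zero.2 (filter_eq_empty_iff.2 fun p hp ⟨hpa, hpb⟩ => h ?_)
    obtain ⟨-, hpn, -, hpalt, -⟩ := mem_altSegs.1 hp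
    exact ⟨by omega, hpalt.mono hpa hpb⟩

theorem card_filter_covers_inclusion_exclusion (s : Finset (ℕ × ℕ)) (u : ℕ) :
    #{p ∈ s | p.1 ≤ u ∧ u ≤ p.2} + #{p ∈ s | p.1 < u ∧ u + 1 ≤ p.2}
      = #{p ∈ s | p = (u, u)} + #{p ∈ s | p.1 < u ∧ u ≤ p.2}
        + #{p ∈ s | p.1 ≤ u ∧ u + 1 ≤ p.2} := by
  simp only [card_filter, ← sum_add_distrib]
  refine sum_congr rfl fun p _ => ?_
  obtain ⟨i, j⟩ := p
  simp only [Prod.mk.injEq]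
  split_ifs <;> omega

theorem coverCount_self_add (hu : u < n) :
    coverCount n x u u + (if 0 < u ∧ u + 1 < n ∧ IsAltOn x (u - 1) (u + 1) then 1 else 0)
      = (if (u, u) ∈ altSegs n x then 1 else 0) + (if 0 < u ∧ IsAltOn x (u - 1) u then 1 else 0)
        + (if u + 1 < n ∧ IsAltOn x u (u + 1) then 1 else 0) := by
  have hleft : ∀ b, u ≤ b → #{p ∈ altSegs n x | p.1 < u ∧ b ≤ p.2}
      = if 0 < u ∧ b < n ∧ IsAltOn x (u - 1) b then 1 else 0 := fun b hb => by
    by_cases h : 0 < u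
    · simp only [h, true_and]
      rw [← coverCount_eq_ite (by omega)]
      exact congrArg card (filter_congr fun p _ => by omega)
    · rw [if_neg fun h' => h h'.1]
      exact card_eq_zero.2 (filter_eq_empty_iff.2 fun p _ hp => by omega)
  have key := card_filter_covers_inclusion_exclusion (altSegs n x) u
  rw [hleft _ (by omega), hleft _ le_rfl, filter_eq', apply_ite card, card_singleton,
    card_empty] at key
  rw [← coverCount_eq_ite (by omega)]
  simpa only [hu, true_and, coverCount] using key

end coverCount

section counting

variable {m n a b : ℕ} (hm : 0 < m)

theorem extWord_of_lt (y : Fin n → Fin m) {k : ℕ} (hk : k < n) :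
    extWord n hm y k = y ⟨k, hk⟩ :=
  dif_pos hk

theorem card_filter_pair_eq_and_pattern (hab : a < b) (hb : b < n) (c : Fin m × Fin m) :
    #{y : Fin n → Fin m | (extWord n hm y a, extWord n hm y (a + 1)) = c ∧
        ∀ k ∈ Icc a b, extWord n hm y k = extWord n hm y (a + (k - a) % 2)}
      = m ^ (n - (b + 1 - a)) := by
  have hs : ∀ k ∈ Icc a b, k < n := fun k hk => (mem_Icc.1 hk).2.trans_lt hb
  rw [← Nat.card_Icc, ← card_attachFin _ hs,
    ← card_filter_forall_mem_eq _ fun k => if ((k : ℕ) - a) % 2 = 0 then c.1 else c.2]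
  refine congrArg card (filter_congr fun y _ => ?_)
  rw [← forall_mem_Icc_eq_ite_iff hab]
  exact ⟨fun h k hk => by rw [← h _ ((mem_attachFin hs).1 hk), extWord_of_lt hm y k.2],
    fun h k hk => by rw [extWord_of_lt hm y (hs _ hk)]; exact h _ ((mem_attachFin hs).2 hk)⟩

/-- On `[a, b]` a word of period two is determined by its first two letters. -/
theorem card_filter_pattern (hab : a < b) (hb : b < n) (C : Finset (Fin m × Fin m)) :
    #{y : Fin n → Fin m | (extWord n hm y a, extWord n hm y (a + 1)) ∈ C ∧
        ∀ k ∈ Icc a b, extWord n hm y k = extWord n hm y (a + (k - a) % 2)} * m ^ (b + 1 - a)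
      = #C * m ^ n := by
  rw [card_eq_sum_card_fiberwise fun y hy => (mem_filter.1 hy).2.1,
    sum_congr rfl fun c hc => ?_, sum_const, smul_eq_mul, mul_assoc, ← pow_add,
    Nat.sub_add_cancel (show b + 1 - a ≤ n by omega)]
  rw [filter_filter, ← card_filter_pair_eq_and_pattern hm hab hb c]
  exact congrArg card (filter_congr fun y _ =>
    ⟨fun ⟨⟨_, hpat⟩, hpair⟩ => ⟨hpair, hpat⟩,
      fun ⟨hpair, hpat⟩ => ⟨⟨hpair ▸ hc, hpat⟩, hpair⟩⟩)

theorem card_isAltOn (hab : a < b) (hb : b < n) :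
    #{y : Fin n → Fin m | IsAltOn (extWord n hm y) a b} * m ^ (b - a) = (m - 1) * m ^ n := by
  have h := card_filter_pattern hm hab hb univ.offDiag
  rw [offDiag_card, card_univ, Fintype.card_fin, show b + 1 - a = b - a + 1 by omega, pow_succ,
    ← Nat.sub_one_mul, ← mul_assoc, mul_right_comm _ m] at h
  rw [← Nat.eq_of_mul_eq_mul_right hm h]
  exact congrArg (· * _) (congrArg card (filter_congr fun y _ => isAltOn_iff hab))

theorem card_mem_altSegs_self {u : ℕ} (hn : 2 ≤ n) (hu : u < n) :
    #{y : Fin n → Fin m | (u, u) ∈ altSegs n (extWord n hm y)}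
      * m ^ (min (u + 1) (n - 1) - (u - 1)) = m ^ n := by
  have h := card_filter_pattern hm (n := n) (a := u - 1) (b := min (u + 1) (n - 1))
    (by omega) (by omega) univ.diag
  rw [diag_card, card_univ, Fintype.card_fin,
    show min (u + 1) (n - 1) + 1 - (u - 1) = min (u + 1) (n - 1) - (u - 1) + 1 by omega, pow_succ,
    ← mul_assoc, mul_comm m (m ^ n)] at h
  rw [← Nat.eq_of_mul_eq_mul_right hm h]
  refine congrArg (· * _) (congrArg card (filter_congr fun y _ => ?_))
  rw [mem_altSegs_self_iff hu, forall_mem_Icc_eq_iff (by omega) (mem_Icc.2 (by omega)), mem_diag]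
  simp only [mem_univ, true_and]

theorem card_isAltOn_div (hab : a < b) (hb : b < n) :
    (#{y : Fin n → Fin m | IsAltOn (extWord n hm y) a b} : ℝ) / m ^ n
      = (m - 1) / m ^ (b - a) := by
  have h := congrArg (Nat.cast : ℕ → ℝ) (card_isAltOn hm hab hb)
  push_cast [Nat.cast_sub (Nat.one_le_iff_ne_zero.2 hm.ne')] at h
  have hm' : (m : ℝ) ≠ 0 := by exact_mod_cast hm.ne'
  rw [div_eq_div_iff (pow_ne_zero _ hm') (pow_ne_zero _ hm'), h]

theorem card_mem_altSegs_self_div {u : ℕ} (hn : 2 ≤ n) (hu : u < n) :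
    (#{y : Fin n → Fin m | (u, u) ∈ altSegs n (extWord n hm y)} : ℝ) / m ^ n
      = 1 / m ^ (min (u + 1) (n - 1) - (u - 1)) := by
  have h := congrArg (Nat.cast : ℕ → ℝ) (card_mem_altSegs_self hm hn hu)
  push_cast at h
  have hm' : (m : ℝ) ≠ 0 := by exact_mod_cast hm.ne'
  rw [div_eq_div_iff (pow_ne_zero _ hm') (pow_ne_zero _ hm'), one_mul, h]

theorem sum_coverCount_self_add {u : ℕ} (hu : u < n) :
    ∑ y : Fin n → Fin m, coverCount n (extWord n hm y) u u
      + #{y : Fin n → Fin m | 0 < u ∧ u + 1 < n ∧ IsAltOn (extWord n hm y) (u - 1) (u + 1)}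
      = #{y : Fin n → Fin m | (u, u) ∈ altSegs n (extWord n hm y)}
        + #{y : Fin n → Fin m | 0 < u ∧ IsAltOn (extWord n hm y) (u - 1) u}
        + #{y : Fin n → Fin m | u + 1 < n ∧ IsAltOn (extWord n hm y) u (u + 1)} := by
  simp only [card_filter, ← sum_add_distrib]
  exact sum_congr rfl fun y _ => coverCount_self_add hu

theorem sum_coverCount_self_div (hn : 2 ≤ n) {u : ℕ} (hu : u < n) :
    (∑ y : Fin n → Fin m, (coverCount n (extWord n hm y) u u : ℝ)) / m ^ n
      = if u = 0 ∨ u + 1 = n then 1 else (2 * (m : ℝ) ^ 2 - 3 * m + 2) / m ^ 2 := by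
  have hm' : (m : ℝ) ≠ 0 := by exact_mod_cast hm.ne'
  have hdiv := congrArg (fun t : ℕ => (t : ℝ) / m ^ n) (sum_coverCount_self_add hm hu)
  simp only [Nat.cast_add, Nat.cast_sum, add_div] at hdiv
  rw [card_mem_altSegs_self_div hm hn hu] at hdiv
  rcases Nat.eq_zero_or_pos u with rfl | hu0
  · simp only [lt_irrefl, false_and, filter_false, card_empty, Nat.cast_zero, zero_div, add_zero,
      zero_add, show 1 < n by omega, true_and] at hdiv
    rw [card_isAltOn_div hm zero_lt_one (show 1 < n by omega),
      show min 1 (n - 1) - (0 - 1) = 1 by omega] at hdiv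
    rw [hdiv, if_pos (Or.inl rfl)]
    field_simp
    ring
  by_cases hun : u + 1 = n
  · simp only [hu0, hun, lt_irrefl, false_and, and_false, filter_false, card_empty, Nat.cast_zero,
      zero_div, add_zero, true_and] at hdiv
    rw [card_isAltOn_div hm (show u - 1 < u by omega) hu, show u - (u - 1) = 1 by omega,
      show min n (n - 1) - (u - 1) = 1 by omega] at hdiv
    rw [hdiv, if_pos (Or.inr hun)]
    field_simp
    ring
  · have hun' : u + 1 < n := by omega
    simp only [hu0, hun', true_and] at hdiv
    rw [card_isAltOn_div hm (show u - 1 < u by omega) hu,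
      card_isAltOn_div hm (show u < u + 1 by omega) hun',
      card_isAltOn_div hm (show u - 1 < u + 1 by omega) hun',
      show min (u + 1) (n - 1) - (u - 1) = 2 by omega, show u - (u - 1) = 1 by omega,
      show u + 1 - (u - 1) = 2 by omega, show u + 1 - u = 1 by omega] at hdiv
    rw [if_neg (by omega), eq_sub_of_add_eq hdiv]
    field_simp
    ring

theorem sum_sumLenSq_div :
    (∑ y : Fin n → Fin m, (sumLenSq n (extWord n hm y) : ℝ)) / m ^ n
      = ∑ u ∈ range n,
          (∑ y : Fin n → Fin m, (coverCount n (extWord n hm y) u u : ℝ)) / m ^ n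
        + 2 * ∑ b ∈ range n, ∑ a ∈ range b,
          (#{y : Fin n → Fin m | IsAltOn (extWord n hm y) a b} : ℝ) / m ^ n := by
  have hoff : ∀ b ∈ range n, ∀ a ∈ range b, ∑ y : Fin n → Fin m,
      (coverCount n (extWord n hm y) a b : ℝ)
        = #{y : Fin n → Fin m | IsAltOn (extWord n hm y) a b} := by
    intro b hb a ha
    simp only [coverCount_eq_ite (mem_range.1 ha), mem_range.1 hb, true_and, Nat.cast_ite,
      Nat.cast_one, Nat.cast_zero, sum_boole]
  simp only [sumLenSq_eq_sum_coverCount, Nat.cast_add, Nat.cast_mul, Nat.cast_sum, Nat.cast_ofNat,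
    sum_add_distrib, ← mul_sum, add_div, mul_div_assoc, sum_div]
  rw [sum_comm]
  congr 2
  rw [sum_comm]
  refine sum_congr rfl fun b hb => ?_
  rw [sum_comm]
  exact sum_congr rfl fun a ha => by rw [← sum_div, hoff b hb a ha]

end counting

/-- For a uniformly random `x ∈ Z_m^n`, the expected value of the sum of the squares of
the lengths of the maximal alternating segments equals
`n(4m²-3m+2)/m² + (6m-4)/m² - 4 - (2/(m-1))(1 - 1/mⁿ) + 2/mⁿ`. -/
theorem stmt6 (n m : ℕ) (hn : 2 ≤ n) (hm : 2 ≤ m) :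
    (∑ y : Fin n → Fin m, (sumLenSq n (extWord n (by omega) y) : ℝ)) / (m : ℝ) ^ n
      = (n : ℝ) * (4 * (m : ℝ) ^ 2 - 3 * m + 2) / (m : ℝ) ^ 2
          + (6 * (m : ℝ) - 4) / (m : ℝ) ^ 2 - 4
          - 2 / ((m : ℝ) - 1) * (1 - 1 / (m : ℝ) ^ n) + 2 / (m : ℝ) ^ n := by
  have hm0 : 0 < m := by omega
  have hm' : (m : ℝ) ≠ 0 := by positivity
  have hm1 : (m : ℝ) - 1 ≠ 0 := sub_ne_zero.2 (by exact_mod_cast (by omega : m ≠ 1))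
  rw [sum_sumLenSq_div hm0,
    sum_congr rfl fun u hu => sum_coverCount_self_div hm0 hn (mem_range.1 hu),
    sum_congr rfl fun b hb => (sum_congr rfl fun a ha =>
      card_isAltOn_div hm0 (mem_range.1 ha) (mem_range.1 hb)).trans
        (sum_range_sub_one_div_pow hm' b),
    sum_sub_distrib, sum_const, card_range, nsmul_one]
  obtain ⟨k, rfl⟩ : ∃ k, n = k + 2 := ⟨n - 2, by omega⟩
  rw [sum_range_ite_zero_or_last]
  have hgeom : ∑ i ∈ range (k + 2), 1 / (m : ℝ) ^ i
      = (1 - 1 / (m : ℝ) ^ (k + 2)) * m / (m - 1) := by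
    simp only [one_div, ← inv_pow]
    rw [geom_sum_eq (inv_ne_one.2 (by exact_mod_cast (by omega : m ≠ 1)))]
    have : (1 : ℝ) - m ≠ 0 := fun h => hm1 (by linarith)
    field_simp
    ring
  rw [hgeom, nsmul_eq_mul, nsmul_eq_mul]
  push_cast
  field_simp
  ring
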